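/- arXiv:1706.04773 — 4 statements merged into one kernel-verified Lean document; each statement's English description precedes it below -/
import Mathlib

section
/- Let I be a calibrated σ-ideal on a compactum X without isolated points containing all singletons, let B ⊆ X be a Borel set with B ∉ I, and let f : B → Y be a Borel-measurable map into a compactum Y without isolated points; fix compatible metrics on X and on Y. Suppose G ⊆ B is a nonempty G_δ subset of X such that every nonempty relatively open subset of G does not belong to I and the restriction f|G is continuous. Let U be a nonempty relatively open subset of G, and let L ⊆ cl(U) and M ⊆ cl(f(U)) be compact sets (closures taken in X and in Y respectively) such that: L is boundary in cl(U) and L ∉ I; f⁻¹(M) ∈ I; and L ⊆ f̌_U[M]. Then there exist nonempty relatively open subsets V_i (i ∈ ℕ) of U such that: (1) cl(V_i) ∩ G ⊆ U for each i; (2) the sets cl(V_i) are pairwise disjoint and each is disjoint from L; (3) L = ⋂_n cl(⋃_{i≥n} V_i); (4) the sets cl(f(V_i)) are pairwise disjoint and each is disjoint from M; (5) diam(V_i) → 0 and diam(f(V_i)) → 0 as i → ∞; (6) ⋂_n cl(⋃_{i≥n} f(V_i)) ⊆ M. -/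
open MeasureTheory Topology Filter Set

/-- A σ-ideal of Borel sets: closed under Borel subsets and countable unions. -/
def SigmaIdeal {X : Type*} [TopologicalSpace X] [MeasurableSpace X]
    (I : Set (Set X)) : Prop :=
  (∀ A ∈ I, MeasurableSet A) ∧
  (∀ A ∈ I, ∀ B : Set X, MeasurableSet B → B ⊆ A → B ∈ I) ∧
  (∀ A : ℕ → Set X, (∀ n, A n ∈ I) → (⋃ n, A n) ∈ I)

/-- `I` is generated by compact sets. -/
def GenByCompacts {X : Type*} [TopologicalSpace X] (I : Set (Set X)) : Prop :=
  ∀ A ∈ I, ∃ S : ℕ → Set X, (∀ n, IsCompact (S n)) ∧ (⋃ n, S n) ∈ I ∧ A ⊆ ⋃ n, S n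

/-- A calibrated σ-ideal. -/
def Calibrated {X : Type*} [TopologicalSpace X] [MeasurableSpace X]
    (I : Set (Set X)) : Prop :=
  SigmaIdeal I ∧ GenByCompacts I ∧
    ∀ K : Set X, IsCompact K → K ∉ I →
      ∀ Kn : ℕ → Set X, (∀ n, IsCompact (Kn n) ∧ Kn n ∈ I) →
        ∃ L : Set X, IsCompact L ∧ L ⊆ K \ (⋃ n, Kn n) ∧ L ∉ I

/-- The compact-valued map `f̌_U`: `x ∈ f̌_U(y)` iff there is a sequence `(xₙ)` in `U`
with `xₙ → x` and `f(xₙ) → y`. -/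
def fCheck {X Y : Type*} [TopologicalSpace X] [TopologicalSpace Y]
    (f : X → Y) (U : Set X) (y : Y) : Set X :=
  {x | ∃ u : ℕ → X, (∀ n, u n ∈ U) ∧ Tendsto u atTop (nhds x) ∧
    Tendsto (fun n => f (u n)) atTop (nhds y)}

/-- `f̌_U[M] = ⋃_{y ∈ M} f̌_U(y)`. -/
def fCheckImage {X Y : Type*} [TopologicalSpace X] [TopologicalSpace Y]
    (f : X → Y) (U : Set X) (M : Set Y) : Set X :=
  ⋃ y ∈ M, fCheck f U y

/-- `L` is boundary in `F`: `L ⊆ F` and `L` has empty interior in the subspace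
topology of `F`. -/
def BoundaryIn {X : Type*} [TopologicalSpace X] (L F : Set X) : Prop :=
  L ⊆ F ∧ ∀ W : Set X, IsOpen W → (W ∩ F).Nonempty → ¬ (W ∩ F ⊆ L)

/-- Auxiliary: build a sequence by strong recursion with choice. -/
theorem exists_seq_strongRec' {α : Type*} (g₀ : α) (Q : ℕ → (ℕ → α) → α → Prop)
    (hcong : ∀ n g g' d, (∀ j, j < n → g j = g' j) → Q n g d → Q n g' d)
    (hstep : ∀ n g, (∀ j, j < n → Q j g (g j)) → ∃ d, Q n g d) :
    ∃ D : ℕ → α, ∀ n, Q n D (D n) := by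
  classical
  let pick : ℕ → (ℕ → α) → α := fun n g => if h : ∃ d, Q n g d then h.choose else g₀
  let E : ℕ → ℕ → α := fun m =>
    Nat.rec (fun _ => g₀) (fun n en => Function.update en n (pick n en)) m
  let D : ℕ → α := fun i => E (i + 1) i
  have hE : ∀ m j, j < m → E m j = D j := by
    intro m
    induction m with
    | zero => intro j h; omega
    | succ m ih =>
      intro j hj
      rcases Nat.lt_succ_iff_lt_or_eq.mp hj with h | h
      · have h2 : E (m + 1) j = E m j := Function.update_of_ne (by omega) _ _
        rw [h2, ih j h]
      · subst h; rfl
  refine ⟨D, ?_⟩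
  intro n
  induction n using Nat.strong_induction_on with
  | _ n ih =>
    have hprev : ∀ j, j < n → Q j (E n) (E n j) := by
      intro j hj
      have h1 : E n j = D j := hE n j hj
      rw [h1]
      exact hcong j D (E n) (D j) (fun k hk => (hE n k (hk.trans hj)).symm) (ih j hj)
    have hex : ∃ d, Q n (E n) d := hstep n (E n) hprev
    have hDn : D n = pick n (E n) := Function.update_self _ _ _
    have hpick : pick n (E n) = hex.choose := dif_pos hex
    have hq : Q n (E n) (D n) := by
      rw [hDn, hpick]; exact hex.choose_spec
    exact hcong n (E n) D (D n) (fun j hj => hE n j hj) hq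

/-- The basic relatively open piece attached to a datum `(p, r, s)`. -/
def VSet {X : Type*} [MetricSpace X] (U : Set X) (d : X × ℝ × ℝ) : Set X :=
  Metric.ball d.1 d.2.1 ∩ U

/-- The property required of the datum chosen at stage `n`. -/
def StageProp {X Y : Type*} [MetricSpace X] [MetricSpace Y] (f : X → Y)
    (U W₀ G L : Set X) (M : Set Y) (xk : ℕ → X)
    (n : ℕ) (K : Set X) (K' : Set Y) (d : X × ℝ × ℝ) : Prop :=
  d.1 ∈ U ∧ 0 < d.2.1 ∧ 0 < d.2.2 ∧
  Metric.closedBall d.1 d.2.1 ⊆ W₀ ∧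
  Disjoint (Metric.closedBall d.1 d.2.1) L ∧
  Disjoint (Metric.closedBall d.1 d.2.1) K ∧
  (∀ q ∈ Metric.ball d.1 d.2.1, q ∈ G → dist (f q) (f d.1) < d.2.2) ∧
  Disjoint (Metric.closedBall (f d.1) d.2.2) M ∧
  Disjoint (Metric.closedBall (f d.1) d.2.2) K' ∧
  dist d.1 (xk (Nat.unpair n).1) + d.2.1 < 1 / (n + 1) ∧
  (∃ y ∈ M, dist (f d.1) y + d.2.2 < 1 / (n + 1)) ∧
  2 * d.2.1 ≤ 1 / (n + 1) ∧ 2 * d.2.2 ≤ 1 / (n + 1)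

/-- Lemma 2.1(A). -/
theorem statement3 {X Y : Type*}
    [MetricSpace X] [CompactSpace X] [Nonempty X] [MeasurableSpace X] [BorelSpace X]
    [MetricSpace Y] [CompactSpace Y] [Nonempty Y] [MeasurableSpace Y] [BorelSpace Y]
    (hX : ∀ x : X, ¬ IsOpen ({x} : Set X))
    (hY : ∀ y : Y, ¬ IsOpen ({y} : Set Y))
    (I : Set (Set X)) (hI : Calibrated I) (hsing : ∀ x : X, {x} ∈ I)
    (B : Set X) (hB : MeasurableSet B) (hBI : B ∉ I)
    (f : X → Y) (hf : Measurable fun x : B => f x.1)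
    -- the set G:
    (G : Set X) (hGB : G ⊆ B) (hGδ : IsGδ G) (hGne : G.Nonempty)
    (hGI : ∀ W : Set X, IsOpen W → (W ∩ G).Nonempty → W ∩ G ∉ I)
    (hfG : ContinuousOn f G)
    -- the set U, a nonempty relatively open subset of G:
    (U : Set X) (hUne : U.Nonempty) (hUopen : ∃ W : Set X, IsOpen W ∧ U = W ∩ G)
    -- the compacta L and M:
    (L : Set X) (hLcomp : IsCompact L) (hLsub : L ⊆ closure U)
    (M : Set Y) (hMcomp : IsCompact M) (hMsub : M ⊆ closure (f '' U))
    (hLbd : BoundaryIn L (closure U)) (hLI : L ∉ I)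
    (hMpre : {x ∈ B | f x ∈ M} ∈ I)
    (hLM : L ⊆ fCheckImage f U M) :
    ∃ V : ℕ → Set X,
      (∀ i, (V i).Nonempty ∧ ∃ W : Set X, IsOpen W ∧ V i = W ∩ U) ∧
      -- (A4)
      (∀ i, closure (V i) ∩ G ⊆ U) ∧
      -- (A5)
      (Pairwise fun i j => Disjoint (closure (V i)) (closure (V j))) ∧
      (∀ i, Disjoint (closure (V i)) L) ∧
      -- (A6)
      (L = ⋂ n, closure (⋃ i, ⋃ (_ : n ≤ i), V i)) ∧
      -- (A7)
      (Pairwise fun i j => Disjoint (closure (f '' V i)) (closure (f '' V j))) ∧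
      (∀ i, Disjoint (closure (f '' V i)) M) ∧
      -- (A8)
      Tendsto (fun i => Metric.diam (V i)) atTop (nhds 0) ∧
      Tendsto (fun i => Metric.diam (f '' V i)) atTop (nhds 0) ∧
      -- (A9)
      (⋂ n, closure (⋃ i, ⋃ (_ : n ≤ i), f '' V i)) ⊆ M := by
  classical
  obtain ⟨W₀, hW₀, hUeq⟩ := hUopen
  have hIdown : ∀ A ∈ I, ∀ B : Set X, MeasurableSet B → B ⊆ A → B ∈ I := hI.1.2.1
  have hUG : U ⊆ G := hUeq ▸ inter_subset_right
  have hGmeas : MeasurableSet G := hGδ.measurableSet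
  have hLclosed : IsClosed L := hLcomp.isClosed
  have hMclosed : IsClosed M := hMcomp.isClosed
  have hempty : (∅ : Set X) ∈ I :=
    hIdown _ (hsing (Classical.arbitrary X)) ∅ MeasurableSet.empty (empty_subset _)
  have hLne : L.Nonempty := by
    rcases L.eq_empty_or_nonempty with h | h
    · exact absurd (h ▸ hempty) (h ▸ hLI)
    · exact h
  have hLM' : ∀ x ∈ L, ∃ y ∈ M, ∃ u : ℕ → X, (∀ n, u n ∈ U) ∧
      Tendsto u atTop (nhds x) ∧ Tendsto (fun n => f (u n)) atTop (nhds y) := by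
    intro x hx
    have h1 := hLM hx
    simp only [fCheckImage, Set.mem_iUnion] at h1
    obtain ⟨y, hy, hxy⟩ := h1
    exact ⟨y, hy, hxy⟩
  have hMne : M.Nonempty := by
    rcases M.eq_empty_or_nonempty with h | h
    · exfalso
      apply hLI
      have hL0 : L = ∅ := by
        apply eq_empty_of_subset_empty
        intro x hx
        obtain ⟨y, hy, -⟩ := hLM' x hx
        simp [h] at hy
      rw [hL0]; exact hempty
    · exact h
  -- a dense sequence in L
  have hsep : TopologicalSpace.SeparableSpace ↥L := hLcomp.isSeparable.separableSpace
  have hLnonempty : Nonempty ↥L := hLne.to_subtype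
  set xk : ℕ → X := fun k => (TopologicalSpace.denseSeq ↥L k).1 with hxkdef
  have hxkL : ∀ k, xk k ∈ L := fun k => (TopologicalSpace.denseSeq ↥L k).2
  have hxkdense : ∀ x ∈ L, ∀ η > (0:ℝ), ∃ k, dist x (xk k) < η := by
    intro x hx η hη
    have hd : Dense (Set.range (TopologicalSpace.denseSeq ↥L)) :=
      TopologicalSpace.denseRange_denseSeq ↥L
    have h1 : (⟨x, hx⟩ : ↥L) ∈ closure (Set.range (TopologicalSpace.denseSeq ↥L)) := hd _
    rw [Metric.mem_closure_iff] at h1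
    obtain ⟨b, ⟨k, rfl⟩, hb⟩ := h1 η hη
    exact ⟨k, by simpa [Subtype.dist_eq] using hb⟩
  -- key point-selection fact
  have key : ∀ x₀ ∈ L, ∀ ε > (0:ℝ), ∀ β > (0:ℝ), ∃ p, p ∈ U ∧ p ∉ L ∧ f p ∉ M ∧
      dist p x₀ < ε ∧ ∃ y ∈ M, dist (f p) y < β := by
    intro x₀ hx₀ ε hε β hβ
    obtain ⟨y, hyM, u, huU, hux, hufy⟩ := hLM' x₀ hx₀
    have h1 : ∀ᶠ n in atTop, dist (u n) x₀ < ε / 2 :=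
      (Metric.tendsto_nhds.mp hux) (ε / 2) (by positivity)
    have h2 : ∀ᶠ n in atTop, dist (f (u n)) y < β / 2 :=
      (Metric.tendsto_nhds.mp hufy) (β / 2) (by positivity)
    obtain ⟨n, hn1, hn2⟩ := (h1.and h2).exists
    set q := u n with hq
    have hqU : q ∈ U := huU n
    have hqG : q ∈ G := hUG hqU
    obtain ⟨δ, hδpos, hδ⟩ :=
      Metric.continuousWithinAt_iff.mp (hfG q hqG) (β / 2) (by positivity)
    set δ' := min δ (ε / 2) with hδ'
    have hδ'pos : 0 < δ' := lt_min hδpos (by positivity)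
    set S := (Metric.ball q δ' ∩ W₀ ∩ Lᶜ) ∩ G with hS
    have hSopen : IsOpen (Metric.ball q δ' ∩ W₀ ∩ Lᶜ) :=
      ((Metric.isOpen_ball.inter hW₀).inter hLclosed.isOpen_compl)
    have hSsubU : S ⊆ U := by
      intro z hz
      rw [hUeq]; exact ⟨hz.1.1.2, hz.2⟩
    have hSne : S.Nonempty := by
      by_contra hSe
      rw [Set.not_nonempty_iff_eq_empty] at hSe
      have hsub : Metric.ball q δ' ∩ U ⊆ L := by
        intro z hz
        by_contra hzL
        have : z ∈ S := ⟨⟨⟨hz.1, (hUeq ▸ hz.2).1⟩, hzL⟩, hUG hz.2⟩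
        simp [hSe] at this
      have h3 : Metric.ball q δ' ∩ closure U ⊆ L := by
        intro z hz
        have hz2 : z ∈ closure (Metric.ball q δ' ∩ U) := Metric.isOpen_ball.inter_closure hz
        have : z ∈ closure L := closure_mono hsub hz2
        rwa [hLclosed.closure_eq] at this
      exact hLbd.2 _ Metric.isOpen_ball
        ⟨q, Metric.mem_ball_self hδ'pos, subset_closure hqU⟩ h3
    have hSI : S ∉ I := hGI _ hSopen hSne
    obtain ⟨p, hpS, hpfM⟩ : ∃ p ∈ S, f p ∉ M := by
      by_contra h
      push_neg at h
      exact hSI (hIdown _ hMpre S (hSopen.measurableSet.inter hGmeas)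
        (fun z hz => ⟨hGB hz.2, h z hz⟩))
    have hpU : p ∈ U := hSsubU hpS
    have hpq : dist p q < δ' := hpS.1.1.1
    refine ⟨p, hpU, hpS.1.2, hpfM, ?_, y, hyM, ?_⟩
    · calc dist p x₀ ≤ dist p q + dist q x₀ := dist_triangle _ _ _
        _ < ε / 2 + ε / 2 := by
            have := hpq.trans_le (min_le_right _ _)
            exact add_lt_add this hn1
        _ = ε := by ring
    · calc dist (f p) y ≤ dist (f p) (f q) + dist (f q) y := dist_triangle _ _ _
        _ < β / 2 + β / 2 := by
            have hfpq : dist (f p) (f q) < β / 2 :=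
              hδ (hUG hpU) (hpq.trans_le (min_le_left _ _))
            exact add_lt_add hfpq hn2
        _ = β := by ring
  -- the stage-selection step
  have step : ∀ (n : ℕ) (K : Set X) (K' : Set Y), IsClosed K → Disjoint L K → IsClosed K' →
      Disjoint M K' → ∃ d, StageProp f U W₀ G L M xk n K K' d := by
    intro n K K' hKc hLK hK'c hMK'
    obtain ⟨δL, hδL, hthickL⟩ := hLK.exists_thickenings hLcomp hKc
    obtain ⟨δM, hδM, hthickM⟩ := hMK'.exists_thickenings hMcomp hK'c
    have hn1 : (0:ℝ) < 1 / (n + 1) := by positivity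
    have hεpos : (0:ℝ) < min δL (1 / (n + 1)) / 2 := by positivity
    have hβpos : (0:ℝ) < min δM (1 / (n + 1)) / 2 := by positivity
    obtain ⟨p, hpU, hpL, hpfM, hpx, y, hyM, hfpy⟩ :=
      key (xk (Nat.unpair n).1) (hxkL _) _ hεpos _ hβpos
    have hinfM : 0 < Metric.infDist (f p) M := (hMclosed.notMem_iff_infDist_pos hMne).1 hpfM
    set s := min (Metric.infDist (f p) M / 2) (min (δM / 2) (1 / (2 * (n + 1)))) with hs_def
    have hspos : 0 < s :=
      lt_min (by positivity) (lt_min (by positivity) (by positivity))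
    have hsM : s ≤ Metric.infDist (f p) M / 2 := min_le_left _ _
    have hsδM : s ≤ δM / 2 := (min_le_right _ _).trans (min_le_left _ _)
    have hsn : s ≤ 1 / (2 * (n + 1)) := (min_le_right _ _).trans (min_le_right _ _)
    obtain ⟨δc, hδc, hδcprop⟩ := Metric.continuousWithinAt_iff.mp (hfG p (hUG hpU)) s hspos
    have hpW₀ : p ∈ W₀ := (hUeq ▸ hpU).1
    obtain ⟨ρ, hρ, hρsub⟩ : ∃ ρ > (0:ℝ), Metric.closedBall p ρ ⊆ W₀ := by
      obtain ⟨t, ht, htsub⟩ := Metric.isOpen_iff.mp hW₀ p hpW₀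
      refine ⟨t / 2, by positivity, fun z hz => htsub ?_⟩
      have : dist z p ≤ t / 2 := Metric.mem_closedBall.mp hz
      exact Metric.mem_ball.mpr (by linarith)
    have hinfL : 0 < Metric.infDist p L := (hLclosed.notMem_iff_infDist_pos hLne).1 hpL
    set r := min δc (min ρ (min (Metric.infDist p L / 2) (min (δL / 2) (1 / (2 * (n + 1))))))
      with hr_def
    have hrpos : 0 < r :=
      lt_min hδc (lt_min hρ (lt_min (by positivity) (lt_min (by positivity) (by positivity))))
    have hrδc : r ≤ δc := min_le_left _ _
    have hrρ : r ≤ ρ := (min_le_right _ _).trans (min_le_left _ _)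
    have hrL : r ≤ Metric.infDist p L / 2 :=
      (min_le_right _ _).trans ((min_le_right _ _).trans (min_le_left _ _))
    have hrδL : r ≤ δL / 2 :=
      (min_le_right _ _).trans
        ((min_le_right _ _).trans ((min_le_right _ _).trans (min_le_left _ _)))
    have hrn : r ≤ 1 / (2 * (n + 1)) :=
      (min_le_right _ _).trans
        ((min_le_right _ _).trans ((min_le_right _ _).trans (min_le_right _ _)))
    have hhalf : (1:ℝ) / (2 * (n + 1)) = (1 / (n + 1)) / 2 := by
      rw [div_div]; ring_nf
    have hεδL : dist p (xk (Nat.unpair n).1) < δL / 2 :=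
      hpx.trans_le (by
        have : min δL (1 / ((n:ℝ) + 1)) ≤ δL := min_le_left _ _
        linarith)
    have hεn : dist p (xk (Nat.unpair n).1) < (1 / ((n:ℝ) + 1)) / 2 :=
      hpx.trans_le (by
        have : min δL (1 / ((n:ℝ) + 1)) ≤ 1 / (n + 1) := min_le_right _ _
        linarith)
    have hβδM : dist (f p) y < δM / 2 :=
      hfpy.trans_le (by
        have : min δM (1 / ((n:ℝ) + 1)) ≤ δM := min_le_left _ _
        linarith)
    have hβn : dist (f p) y < (1 / ((n:ℝ) + 1)) / 2 :=
      hfpy.trans_le (by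
        have : min δM (1 / ((n:ℝ) + 1)) ≤ 1 / (n + 1) := min_le_right _ _
        linarith)
    refine ⟨(p, r, s), hpU, hrpos, hspos, ?_, ?_, ?_, ?_, ?_, ?_, ?_, ⟨y, hyM, ?_⟩, ?_, ?_⟩
    · exact (Metric.closedBall_subset_closedBall hrρ).trans hρsub
    · rw [Set.disjoint_left]
      intro z hz hzL
      have h1 : Metric.infDist p L ≤ dist p z := Metric.infDist_le_dist_of_mem hzL
      have h2 : dist z p ≤ r := Metric.mem_closedBall.mp hz
      rw [dist_comm] at h2
      linarith
    · rw [Set.disjoint_left]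
      intro z hz hzK
      have h1 : z ∈ Metric.thickening δL L := by
        rw [Metric.mem_thickening_iff]
        refine ⟨xk (Nat.unpair n).1, hxkL _, ?_⟩
        calc dist z (xk (Nat.unpair n).1) ≤ dist z p + dist p (xk (Nat.unpair n).1) :=
              dist_triangle _ _ _
          _ < δL / 2 + δL / 2 := by
              have h2 := Metric.mem_closedBall.mp hz
              have h3 : dist z p ≤ δL / 2 := le_trans h2 hrδL
              exact add_lt_add_of_le_of_lt h3 hεδL
          _ = δL := by ring
      have h2 : z ∈ Metric.thickening δL K := Metric.self_subset_thickening hδL K hzK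
      exact Set.disjoint_left.mp hthickL h1 h2
    · intro q hq hqG
      exact hδcprop hqG ((Metric.mem_ball.mp hq).trans_le hrδc)
    · rw [Set.disjoint_left]
      intro z hz hzM
      have h1 : Metric.infDist (f p) M ≤ dist (f p) z := Metric.infDist_le_dist_of_mem hzM
      have h2 : dist z (f p) ≤ s := Metric.mem_closedBall.mp hz
      rw [dist_comm] at h2
      linarith
    · rw [Set.disjoint_left]
      intro z hz hzK'
      have h1 : z ∈ Metric.thickening δM M := by
        rw [Metric.mem_thickening_iff]
        refine ⟨y, hyM, ?_⟩
        calc dist z y ≤ dist z (f p) + dist (f p) y := dist_triangle _ _ _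
          _ < δM / 2 + δM / 2 := by
              have h3 : dist z (f p) ≤ δM / 2 := le_trans (Metric.mem_closedBall.mp hz) hsδM
              exact add_lt_add_of_le_of_lt h3 hβδM
          _ = δM := by ring
      have h2 : z ∈ Metric.thickening δM K' := Metric.self_subset_thickening hδM K' hzK'
      exact Set.disjoint_left.mp hthickM h1 h2
    · have : r ≤ (1 / ((n:ℝ) + 1)) / 2 := hhalf ▸ hrn
      linarith
    · have : s ≤ (1 / ((n:ℝ) + 1)) / 2 := hhalf ▸ hsn
      linarith
    · have : r ≤ (1 / ((n:ℝ) + 1)) / 2 := hhalf ▸ hrn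
      linarith
    · have : s ≤ (1 / ((n:ℝ) + 1)) / 2 := hhalf ▸ hsn
      linarith
  -- congruence for the recursion
  have hcong : ∀ (n : ℕ) (g g' : ℕ → X × ℝ × ℝ) (d : X × ℝ × ℝ),
      (∀ j, j < n → g j = g' j) →
      StageProp f U W₀ G L M xk n (⋃ j ∈ Finset.range n, closure (VSet U (g j)))
        (⋃ j ∈ Finset.range n, closure (f '' VSet U (g j))) d →
      StageProp f U W₀ G L M xk n (⋃ j ∈ Finset.range n, closure (VSet U (g' j)))
        (⋃ j ∈ Finset.range n, closure (f '' VSet U (g' j))) d := by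
    intro n g g' d h hQ
    have e1 : (⋃ j ∈ Finset.range n, closure (VSet U (g j)))
        = ⋃ j ∈ Finset.range n, closure (VSet U (g' j)) :=
      Set.iUnion₂_congr fun j hj => by rw [h j (Finset.mem_range.mp hj)]
    have e2 : (⋃ j ∈ Finset.range n, closure (f '' VSet U (g j)))
        = ⋃ j ∈ Finset.range n, closure (f '' VSet U (g' j)) :=
      Set.iUnion₂_congr fun j hj => by rw [h j (Finset.mem_range.mp hj)]
    rwa [e1, e2] at hQ
  have hstepQ : ∀ (n : ℕ) (g : ℕ → X × ℝ × ℝ),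
      (∀ j, j < n → StageProp f U W₀ G L M xk j
        (⋃ k ∈ Finset.range j, closure (VSet U (g k)))
        (⋃ k ∈ Finset.range j, closure (f '' VSet U (g k))) (g j)) →
      ∃ d, StageProp f U W₀ G L M xk n (⋃ j ∈ Finset.range n, closure (VSet U (g j)))
        (⋃ j ∈ Finset.range n, closure (f '' VSet U (g j))) d := by
    intro n g hprev
    refine step n _ _ ?_ ?_ ?_ ?_
    · exact (Finset.range n).finite_toSet.isClosed_biUnion fun j _ => isClosed_closure
    · rw [Set.disjoint_iUnion₂_right]
      intro j hj
      have h5 := (hprev j (Finset.mem_range.mp hj)).2.2.2.2.1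
      exact h5.symm.mono_right
        ((closure_mono inter_subset_left).trans Metric.closure_ball_subset_closedBall)
    · exact (Finset.range n).finite_toSet.isClosed_biUnion fun j _ => isClosed_closure
    · rw [Set.disjoint_iUnion₂_right]
      intro j hj
      have h7 := (hprev j (Finset.mem_range.mp hj)).2.2.2.2.2.2.1
      have h8 := (hprev j (Finset.mem_range.mp hj)).2.2.2.2.2.2.2.1
      have hsubf : f '' VSet U (g j) ⊆ Metric.ball (f (g j).1) (g j).2.2 := by
        rintro z ⟨q, ⟨hq1, hq2⟩, rfl⟩
        exact Metric.mem_ball.mpr (h7 q hq1 (hUG hq2))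
      exact h8.symm.mono_right
        ((closure_mono hsubf).trans Metric.closure_ball_subset_closedBall)
  obtain ⟨D, hQ⟩ := exists_seq_strongRec' (Classical.arbitrary X, (1:ℝ), (1:ℝ))
    (fun n g d => StageProp f U W₀ G L M xk n
      (⋃ j ∈ Finset.range n, closure (VSet U (g j)))
      (⋃ j ∈ Finset.range n, closure (f '' VSet U (g j))) d)
    hcong hstepQ
  -- accessors
  have hp : ∀ i, (D i).1 ∈ U := fun i => (hQ i).1
  have hr : ∀ i, 0 < (D i).2.1 := fun i => (hQ i).2.1
  have hs : ∀ i, 0 < (D i).2.2 := fun i => (hQ i).2.2.1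
  have hW : ∀ i, Metric.closedBall (D i).1 (D i).2.1 ⊆ W₀ := fun i => (hQ i).2.2.2.1
  have hdL : ∀ i, Disjoint (Metric.closedBall (D i).1 (D i).2.1) L := fun i => (hQ i).2.2.2.2.1
  have hdK : ∀ i, Disjoint (Metric.closedBall (D i).1 (D i).2.1)
      (⋃ j ∈ Finset.range i, closure (VSet U (D j))) := fun i => (hQ i).2.2.2.2.2.1
  have hcont : ∀ i, ∀ q ∈ Metric.ball (D i).1 (D i).2.1, q ∈ G →
      dist (f q) (f (D i).1) < (D i).2.2 := fun i => (hQ i).2.2.2.2.2.2.1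
  have hdM : ∀ i, Disjoint (Metric.closedBall (f (D i).1) (D i).2.2) M :=
    fun i => (hQ i).2.2.2.2.2.2.2.1
  have hdK' : ∀ i, Disjoint (Metric.closedBall (f (D i).1) (D i).2.2)
      (⋃ j ∈ Finset.range i, closure (f '' VSet U (D j))) :=
    fun i => (hQ i).2.2.2.2.2.2.2.2.1
  have hdxk : ∀ i, dist (D i).1 (xk (Nat.unpair i).1) + (D i).2.1 < 1 / (i + 1) :=
    fun i => (hQ i).2.2.2.2.2.2.2.2.2.1
  have hyx : ∀ i, ∃ y ∈ M, dist (f (D i).1) y + (D i).2.2 < 1 / (i + 1) :=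
    fun i => (hQ i).2.2.2.2.2.2.2.2.2.2.1
  have h2r : ∀ i, 2 * (D i).2.1 ≤ 1 / (i + 1) :=
    fun i => (hQ i).2.2.2.2.2.2.2.2.2.2.2.1
  have h2s : ∀ i, 2 * (D i).2.2 ≤ 1 / (i + 1) :=
    fun i => (hQ i).2.2.2.2.2.2.2.2.2.2.2.2
  set V : ℕ → Set X := fun i => VSet U (D i) with hVdef
  have hcl : ∀ i, closure (V i) ⊆ Metric.closedBall (D i).1 (D i).2.1 := fun i =>
    (closure_mono inter_subset_left).trans Metric.closure_ball_subset_closedBall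
  have hfV : ∀ i, f '' V i ⊆ Metric.ball (f (D i).1) (D i).2.2 := by
    rintro i z ⟨q, ⟨hq1, hq2⟩, rfl⟩
    exact Metric.mem_ball.mpr (hcont i q hq1 (hUG hq2))
  have hclf : ∀ i, closure (f '' V i) ⊆ Metric.closedBall (f (D i).1) (D i).2.2 := fun i =>
    (closure_mono (hfV i)).trans Metric.closure_ball_subset_closedBall
  have hpV : ∀ i, (D i).1 ∈ V i := fun i => ⟨Metric.mem_ball_self (hr i), hp i⟩
  have hdisj : ∀ i j, i < j → Disjoint (closure (V j)) (closure (V i)) := by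
    intro i j hij
    refine (hdK j).mono (hcl j) ?_
    show closure (VSet U (D i)) ⊆ _
    exact Set.subset_iUnion₂ (s := fun k _ => closure (VSet U (D k))) i (Finset.mem_range.mpr hij)
  have hdisjf : ∀ i j, i < j → Disjoint (closure (f '' V j)) (closure (f '' V i)) := by
    intro i j hij
    refine (hdK' j).mono (hclf j) ?_
    show closure (f '' VSet U (D i)) ⊆ _
    exact Set.subset_iUnion₂ (s := fun k _ => closure (f '' VSet U (D k))) i
      (Finset.mem_range.mpr hij)
  have hlimL : ∀ z : X, (∀ n : ℕ, Metric.infDist z L ≤ 1 / (n + 1)) → z ∈ L := by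
    intro z hz
    have h0 : Metric.infDist z L = 0 := by
      by_contra h
      have hpos : 0 < Metric.infDist z L :=
        lt_of_le_of_ne Metric.infDist_nonneg (Ne.symm h)
      obtain ⟨n, hn⟩ := exists_nat_one_div_lt hpos
      exact absurd (hz n) (not_le.mpr hn)
    exact (hLclosed.mem_iff_infDist_zero hLne).2 h0
  have hlimM : ∀ z : Y, (∀ n : ℕ, Metric.infDist z M ≤ 1 / (n + 1)) → z ∈ M := by
    intro z hz
    have h0 : Metric.infDist z M = 0 := by
      by_contra h
      have hpos : 0 < Metric.infDist z M :=
        lt_of_le_of_ne Metric.infDist_nonneg (Ne.symm h)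
      obtain ⟨n, hn⟩ := exists_nat_one_div_lt hpos
      exact absurd (hz n) (not_le.mpr hn)
    exact (hMclosed.mem_iff_infDist_zero hMne).2 h0
  have hmono : ∀ n i : ℕ, n ≤ i → (1:ℝ) / (i + 1) ≤ 1 / (n + 1) := by
    intro n i hni
    apply one_div_le_one_div_of_le (by positivity)
    have : (n:ℝ) ≤ i := Nat.cast_le.mpr hni
    linarith
  refine ⟨V, ?_, ?_, ?_, ?_, ?_, ?_, ?_, ?_, ?_, ?_⟩
  · exact fun i => ⟨⟨(D i).1, hpV i⟩, Metric.ball (D i).1 (D i).2.1, Metric.isOpen_ball, rfl⟩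
  · intro i z hz
    rw [hUeq]
    exact ⟨hW i (hcl i hz.1), hz.2⟩
  · intro i j hij
    rcases lt_or_gt_of_ne hij with h | h
    · exact (hdisj i j h).symm
    · exact hdisj j i h
  · exact fun i => (hdL i).mono_left (hcl i)
  · apply Set.Subset.antisymm
    · intro x hx
      refine Set.mem_iInter.mpr fun n => ?_
      rw [Metric.mem_closure_iff]
      intro η hη
      obtain ⟨k, hk⟩ := hxkdense x hx (η / 2) (by positivity)
      obtain ⟨m₀, hm₀⟩ := exists_nat_one_div_lt (show (0:ℝ) < η / 2 by positivity)
      set i := Nat.pair k (max n m₀) with hi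
      have hin : n ≤ i := le_trans (le_max_left _ _) (Nat.right_le_pair _ _)
      have him : m₀ ≤ i := le_trans (le_max_right _ _) (Nat.right_le_pair _ _)
      have hk' : (Nat.unpair i).1 = k := by rw [hi, Nat.unpair_pair]
      have hdpi : dist (D i).1 (xk k) < 1 / (i + 1) := by
        have h1 := hdxk i
        rw [hk'] at h1
        have := hr i
        linarith
      refine ⟨(D i).1, Set.mem_iUnion.mpr ⟨i, Set.mem_iUnion.mpr ⟨hin, hpV i⟩⟩, ?_⟩
      calc dist x (D i).1 ≤ dist x (xk k) + dist (xk k) (D i).1 := dist_triangle _ _ _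
        _ < η / 2 + η / 2 := by
            refine add_lt_add hk ?_
            rw [dist_comm]
            exact (hdpi.trans_le (hmono m₀ i him)).trans hm₀
        _ = η := by ring
    · intro z hz
      apply hlimL
      intro n
      have hzn : z ∈ closure (⋃ i, ⋃ (_ : n ≤ i), V i) := Set.mem_iInter.mp hz n
      have hsub : (⋃ i, ⋃ (_ : n ≤ i), V i) ⊆ {w | Metric.infDist w L ≤ 1 / (n + 1)} := by
        intro w hw
        simp only [Set.mem_iUnion] at hw
        obtain ⟨i, hni, hwV⟩ := hw
        have h1 : dist w (D i).1 < (D i).2.1 := Metric.mem_ball.mp hwV.1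
        have h2 := hdxk i
        have h3 := hmono n i hni
        have h4 : Metric.infDist w L ≤ dist w (xk (Nat.unpair i).1) :=
          Metric.infDist_le_dist_of_mem (hxkL _)
        have h5 : dist w (xk (Nat.unpair i).1) ≤
            dist w (D i).1 + dist (D i).1 (xk (Nat.unpair i).1) := dist_triangle _ _ _
        simp only [Set.mem_setOf_eq]
        linarith
      have hcl' : IsClosed {w : X | Metric.infDist w L ≤ 1 / (n + 1)} :=
        isClosed_le (Metric.continuous_infDist_pt L) continuous_const
      exact (closure_minimal hsub hcl') hzn
  · intro i j hij
    rcases lt_or_gt_of_ne hij with h | h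
    · exact (hdisjf i j h).symm
    · exact hdisjf j i h
  · exact fun i => (hdM i).mono_left (hclf i)
  · refine squeeze_zero (fun i => Metric.diam_nonneg) (fun i => ?_)
      tendsto_one_div_add_atTop_nhds_zero_nat
    calc Metric.diam (V i) ≤ Metric.diam (Metric.ball (D i).1 (D i).2.1) :=
          Metric.diam_mono inter_subset_left Metric.isBounded_ball
      _ ≤ 2 * (D i).2.1 := Metric.diam_ball (hr i).le
      _ ≤ 1 / (i + 1) := h2r i
  · refine squeeze_zero (fun i => Metric.diam_nonneg) (fun i => ?_)
      tendsto_one_div_add_atTop_nhds_zero_nat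
    calc Metric.diam (f '' V i) ≤ Metric.diam (Metric.ball (f (D i).1) (D i).2.2) :=
          Metric.diam_mono (hfV i) Metric.isBounded_ball
      _ ≤ 2 * (D i).2.2 := Metric.diam_ball (hs i).le
      _ ≤ 1 / (i + 1) := h2s i
  · intro z hz
    apply hlimM
    intro n
    have hzn : z ∈ closure (⋃ i, ⋃ (_ : n ≤ i), f '' V i) := Set.mem_iInter.mp hz n
    have hsub : (⋃ i, ⋃ (_ : n ≤ i), f '' V i) ⊆ {w | Metric.infDist w M ≤ 1 / (n + 1)} := by
      intro w hw
      simp only [Set.mem_iUnion] at hw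
      obtain ⟨i, hni, hwV⟩ := hw
      obtain ⟨y, hyM, hylt⟩ := hyx i
      have h1 : dist w (f (D i).1) < (D i).2.2 := Metric.mem_ball.mp (hfV i hwV)
      have h3 := hmono n i hni
      have h4 : Metric.infDist w M ≤ dist w y := Metric.infDist_le_dist_of_mem hyM
      have h5 : dist w y ≤ dist w (f (D i).1) + dist (f (D i).1) y := dist_triangle _ _ _
      simp only [Set.mem_setOf_eq]
      linarith
    have hcl' : IsClosed {w : Y | Metric.infDist w M ≤ 1 / (n + 1)} :=
      isClosed_le (Metric.continuous_infDist_pt M) continuous_const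
    exact (closure_minimal hsub hcl') hzn
end

section
/- Let I be a calibrated σ-ideal on a compactum X without isolated points containing all singletons, let B ⊆ X be a Borel set, and let f : B → Y be a Borel-measurable map into a compactum Y without isolated points such that f⁻¹({y}) ∈ I for every y ∈ Y. Suppose G ⊆ B is a nonempty G_δ subset of X such that every nonempty relatively open subset of G does not belong to I and the restriction f|G is continuous. Then for every nonempty relatively open subset U of G there exist compact sets L ⊆ cl(U) and M ⊆ cl(f(U)) (closures in X and in Y respectively) such that: L is boundary in cl(U) and L ∉ I; M is boundary in cl(f(U)); and L ⊆ f̌_U[M]. -/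
open MeasureTheory Topology Filter Set

private lemma nullSeq : Tendsto (fun n : ℕ => 1/((n:ℝ)+1)) atTop (nhds 0) :=
  tendsto_one_div_add_atTop_nhds_zero_nat

private lemma tendsto_of_dist_le' {X : Type*} [PseudoMetricSpace X] {u : ℕ → X} {x : X}
    {a : ℕ → ℝ} (h : ∀ n, dist (u n) x ≤ a n) (ha : Tendsto a atTop (nhds 0)) :
    Tendsto u atTop (nhds x) :=
  tendsto_iff_dist_tendsto_zero.2 (squeeze_zero (fun _ => dist_nonneg) h ha)

private lemma fCheck_close {X Y : Type*} [MetricSpace X] [MetricSpace Y]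
    {f : X → Y} {U : Set X} {y : Y} {x : X} (hx : x ∈ fCheck f U y) {ε : ℝ} (hε : 0 < ε) :
    ∃ u, u ∈ U ∧ dist u x < ε ∧ dist (f u) y < ε := by
  obtain ⟨u, hU, hux, hfy⟩ := hx
  obtain ⟨N1, h1⟩ := Metric.tendsto_atTop.mp hux ε hε
  obtain ⟨N2, h2⟩ := Metric.tendsto_atTop.mp hfy ε hε
  exact ⟨u (max N1 N2), hU _, h1 _ (le_max_left _ _), h2 _ (le_max_right _ _)⟩

private lemma isClosed_fCheck {X Y : Type*} [MetricSpace X] [MetricSpace Y]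
    (f : X → Y) (U : Set X) (y : Y) : IsClosed (fCheck f U y) := by
  apply isClosed_of_closure_subset
  intro x hx
  have h : ∀ n : ℕ, ∃ u, u ∈ U ∧ dist u x < 1/((n:ℝ)+1) ∧ dist (f u) y < 1/((n:ℝ)+1) := by
    intro n
    have hpos : (0:ℝ) < 1/((n:ℝ)+1) := by positivity
    obtain ⟨x', hx', hd⟩ := Metric.mem_closure_iff.mp hx _ (half_pos hpos)
    obtain ⟨u, hu1, hu2, hu3⟩ := fCheck_close hx' (half_pos hpos)
    refine ⟨u, hu1, ?_, lt_of_lt_of_le hu3 (by linarith)⟩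
    have : dist u x ≤ dist u x' + dist x' x := dist_triangle _ _ _
    have hxx : dist x' x = dist x x' := dist_comm _ _
    linarith
  choose u hU hux hfy using h
  exact ⟨u, hU, tendsto_of_dist_le' (fun n => (hux n).le) nullSeq,
    tendsto_of_dist_le' (fun n => (hfy n).le) nullSeq⟩

private lemma exists_fCheck {X Y : Type*} [MetricSpace X] [MetricSpace Y] [CompactSpace Y]
    (f : X → Y) (U : Set X) {x : X} (hx : x ∈ closure U) :
    ∃ y ∈ closure (f '' U), x ∈ fCheck f U y := by
  have h : ∀ n : ℕ, ∃ u ∈ U, dist x u < 1/((n:ℝ)+1) := fun n =>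
    Metric.mem_closure_iff.mp hx _ (by positivity)
  choose u hU hd using h
  have hcpt : IsCompact (closure (f '' U)) := isClosed_closure.isCompact
  have hmem : ∀ n, f (u n) ∈ closure (f '' U) := fun n => subset_closure ⟨u n, hU n, rfl⟩
  obtain ⟨y, hy, φ, hφ, hten⟩ := hcpt.tendsto_subseq hmem
  refine ⟨y, hy, fun n => u (φ n), fun n => hU _, ?_, hten⟩
  refine tendsto_of_dist_le' (a := fun n => 1/((n:ℝ)+1)) ?_ nullSeq
  intro n
  rw [dist_comm]
  refine (hd (φ n)).le.trans ?_
  have h1 : (n:ℝ) + 1 ≤ (φ n : ℝ) + 1 := by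
    have := hφ.le_apply (x := n)
    exact_mod_cast Nat.succ_le_succ this
  exact one_div_le_one_div_of_le (by positivity) h1

private lemma isClosed_M {X Y : Type*} [MetricSpace X] [MetricSpace Y]
    {f : X → Y} {U : Set X} {L : Set X} (hL : IsCompact L) :
    IsClosed {y : Y | ∃ x ∈ L, x ∈ fCheck f U y} := by
  apply IsSeqClosed.isClosed
  intro ys y hmem hlim
  choose x hxL hxc using hmem
  obtain ⟨x₀, hx₀L, φ, hφ, hxlim⟩ := hL.tendsto_subseq hxL
  have h : ∀ n : ℕ, ∃ u, u ∈ U ∧ dist u (x (φ n)) < 1/((n:ℝ)+1) ∧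
      dist (f u) (ys (φ n)) < 1/((n:ℝ)+1) :=
    fun n => fCheck_close (hxc (φ n)) (by positivity)
  choose u hU hd1 hd2 using h
  have hylim : Tendsto (ys ∘ φ) atTop (nhds y) := hlim.comp hφ.tendsto_atTop
  refine ⟨x₀, hx₀L, u, hU, ?_, ?_⟩
  · refine tendsto_of_dist_le' (a := fun n => 1/((n:ℝ)+1) + dist ((x ∘ φ) n) x₀) ?_ ?_
    · intro n
      have := dist_triangle (u n) (x (φ n)) x₀
      have h2 := (hd1 n).le
      simp only [Function.comp_apply]
      linarith
    · have h3 : Tendsto (fun n => dist ((x ∘ φ) n) x₀) atTop (nhds 0) :=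
        tendsto_iff_dist_tendsto_zero.mp hxlim
      simpa using nullSeq.add h3
  · refine tendsto_of_dist_le' (a := fun n => 1/((n:ℝ)+1) + dist ((ys ∘ φ) n) y) ?_ ?_
    · intro n
      have := dist_triangle (f (u n)) (ys (φ n)) y
      have h2 := (hd2 n).le
      simp only [Function.comp_apply]
      linarith
    · have h3 : Tendsto (fun n => dist ((ys ∘ φ) n) y) atTop (nhds 0) :=
        tendsto_iff_dist_tendsto_zero.mp hylim
      simpa using nullSeq.add h3


/-- Claim 3.1 (the key claim in the proof of Theorem 1.1(i)). -/
theorem statement4 {X Y : Type*}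
    [MetricSpace X] [CompactSpace X] [Nonempty X] [MeasurableSpace X] [BorelSpace X]
    [MetricSpace Y] [CompactSpace Y] [Nonempty Y] [MeasurableSpace Y] [BorelSpace Y]
    (hX : ∀ x : X, ¬ IsOpen ({x} : Set X))
    (hY : ∀ y : Y, ¬ IsOpen ({y} : Set Y))
    (I : Set (Set X)) (hI : Calibrated I) (hsing : ∀ x : X, {x} ∈ I)
    (B : Set X) (hB : MeasurableSet B)
    (f : X → Y) (hf : Measurable fun x : B => f x.1)
    (hfib : ∀ y : Y, {x ∈ B | f x = y} ∈ I)
    -- the set G: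
    (G : Set X) (hGB : G ⊆ B) (hGδ : IsGδ G) (hGne : G.Nonempty)
    (hGI : ∀ W : Set X, IsOpen W → (W ∩ G).Nonempty → W ∩ G ∉ I)
    (hfG : ContinuousOn f G) :
    ∀ U : Set X, U.Nonempty → (∃ W : Set X, IsOpen W ∧ U = W ∩ G) →
      ∃ L : Set X, ∃ M : Set Y,
        IsCompact L ∧ L ⊆ closure U ∧ IsCompact M ∧ M ⊆ closure (f '' U) ∧
        BoundaryIn L (closure U) ∧ L ∉ I ∧
        BoundaryIn M (closure (f '' U)) ∧
        L ⊆ fCheckImage f U M := by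
  intro U hUne hUW
  obtain ⟨W₀, hW₀, hUeq⟩ := hUW
  have Imeas : ∀ A ∈ I, MeasurableSet A := hI.1.1
  have Idown : ∀ A ∈ I, ∀ B' : Set X, MeasurableSet B' → B' ⊆ A → B' ∈ I := hI.1.2.1
  have hGmeas : MeasurableSet G := hGδ.measurableSet
  have hUmeas : MeasurableSet U := by rw [hUeq]; exact hW₀.measurableSet.inter hGmeas
  have hUG : U ⊆ G := by rw [hUeq]; exact inter_subset_right
  have hUnotI : U ∉ I := by
    rw [hUeq]; exact hGI W₀ hW₀ (hUeq ▸ hUne)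
  have hKnotI : closure U ∉ I := fun h =>
    hUnotI (Idown _ h U hUmeas subset_closure)
  -- countable dense sequence in U
  haveI : Nonempty ↥U := hUne.to_subtype
  set c : ℕ → X := fun m => (TopologicalSpace.denseSeq ↥U m : X) with hc
  have hcU : ∀ m, c m ∈ U := fun m => (TopologicalSpace.denseSeq ↥U m).2
  have hcdense : ∀ V : Set X, IsOpen V → (V ∩ U).Nonempty → ∃ m, c m ∈ V := by
    rintro V hV ⟨z, hzV, hzU⟩
    have hop : IsOpen (Subtype.val ⁻¹' V : Set ↥U) := hV.preimage continuous_subtype_val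
    obtain ⟨m, hm⟩ := (TopologicalSpace.denseRange_denseSeq ↥U).exists_mem_open hop
      ⟨⟨z, hzU⟩, hzV⟩
    exact ⟨m, hm⟩
  -- countable dense sequence in f '' U
  have hfUne : (f '' U).Nonempty := hUne.image f
  haveI : Nonempty ↥(f '' U) := hfUne.to_subtype
  set d : ℕ → Y := fun m => (TopologicalSpace.denseSeq ↥(f '' U) m : Y) with hdd
  have hdU : ∀ m, d m ∈ f '' U := fun m => (TopologicalSpace.denseSeq ↥(f '' U) m).2
  have hddense : ∀ V : Set Y, IsOpen V → (V ∩ f '' U).Nonempty → ∃ m, d m ∈ V := by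
    rintro V hV ⟨z, hzV, hzU⟩
    have hop : IsOpen (Subtype.val ⁻¹' V : Set ↥(f '' U)) :=
      hV.preimage continuous_subtype_val
    obtain ⟨m, hm⟩ := (TopologicalSpace.denseRange_denseSeq ↥(f '' U)).exists_mem_open hop
      ⟨⟨z, hzU⟩, hzV⟩
    exact ⟨m, hm⟩
  -- σ-compact covers of the fibers over the d n
  have hcov := fun n => hI.2.1 _ (hfib (d n))
  choose S hScomp hSI hSsub using hcov
  have hSnkI : ∀ n k, S n k ∈ I := fun n k =>
    Idown _ (hSI n) _ (hScomp n k).isClosed.measurableSet (subset_iUnion _ k)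
  -- combined countable family of compact sets in I
  set e : (ℕ ⊕ ℕ × ℕ) ≃ ℕ := Denumerable.eqv (ℕ ⊕ ℕ × ℕ) with he
  set KK : ℕ → Set X := fun j =>
    Sum.elim (fun m => ({c m} : Set X)) (fun p => S p.1 p.2) (e.symm j) with hKK
  have hKKc : ∀ j, IsCompact (KK j) ∧ KK j ∈ I := by
    intro j
    rcases h : e.symm j with m | ⟨n, k⟩ <;> simp only [hKK, h, Sum.elim_inl, Sum.elim_inr]
    · exact ⟨isCompact_singleton, hsing _⟩
    · exact ⟨hScomp n k, hSnkI n k⟩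
  have hKKsing : ∀ m, {c m} ⊆ ⋃ j, KK j := by
    intro m
    refine subset_trans ?_ (subset_iUnion KK (e (Sum.inl m)))
    simp [hKK, Equiv.symm_apply_apply]
  have hKKS : ∀ n k, S n k ⊆ ⋃ j, KK j := by
    intro n k
    refine subset_trans ?_ (subset_iUnion KK (e (Sum.inr (n, k))))
    simp [hKK, Equiv.symm_apply_apply]
  -- first calibration
  obtain ⟨L0, hL0c, hL0sub, hL0I⟩ :=
    hI.2.2 (closure U) isClosed_closure.isCompact hKnotI KK hKKc
  have hL0clU : L0 ⊆ closure U := fun x hx => (hL0sub hx).1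
  have hL0c' : ∀ m, c m ∉ L0 := fun m hm =>
    (hL0sub hm).2 (hKKsing m rfl)
  have hL0fib : ∀ n x, x ∈ L0 → x ∈ B → f x ≠ d n := by
    intro n x hxL hxB hfx
    have hx' : x ∈ ⋃ k, S n k := hSsub n ⟨hxB, hfx⟩
    obtain ⟨k, hk⟩ := mem_iUnion.mp hx'
    exact (hL0sub hxL).2 (hKKS n k hk)
  -- boundary in closure U from avoiding the dense sequence c
  have hboundary : ∀ L' : Set X, L' ⊆ closure U → (∀ m, c m ∉ L') →
      BoundaryIn L' (closure U) := by
    intro L' hsub hcm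
    refine ⟨hsub, ?_⟩
    rintro V hV ⟨z, hzV, hzcl⟩ hVL
    have hVU : (V ∩ U).Nonempty := mem_closure_iff.mp hzcl V hV hzV
    obtain ⟨m, hm⟩ := hcdense V hV hVU
    exact hcm m (hVL ⟨hm, subset_closure (hcU m)⟩)
  -- points of G in fCheck-fibers must be actual fiber points
  have hPG : ∀ (y : Y) (x : X), x ∈ G → x ∈ fCheck f U y → f x = y := by
    rintro y x hxG ⟨u, hU, hux, hfy⟩
    have huG : Tendsto u atTop (nhds x ⊓ 𝓟 G) := by
      rw [tendsto_inf]
      exact ⟨hux, tendsto_principal.mpr (Eventually.of_forall fun n => hUG (hU n))⟩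
    have hcont : Tendsto (fun n => f (u n)) atTop (nhds (f x)) :=
      ((hfG x hxG)).tendsto.comp huG
    exact tendsto_nhds_unique hcont hfy
  -- main dichotomy
  by_cases hA : ∃ n, L0 ∩ fCheck f U (d n) ∉ I
  · -- Branch A : M is a singleton {d n}
    obtain ⟨n, hn⟩ := hA
    refine ⟨L0 ∩ fCheck f U (d n), {d n}, hL0c.inter_right (isClosed_fCheck f U (d n)),
      inter_subset_left.trans hL0clU, isCompact_singleton,
      singleton_subset_iff.mpr (subset_closure (hdU n)),
      hboundary _ (inter_subset_left.trans hL0clU) (fun m hm => hL0c' m hm.1), hn, ?_, ?_⟩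
    · -- BoundaryIn {d n} (closure (f '' U))
      refine ⟨singleton_subset_iff.mpr (subset_closure (hdU n)), ?_⟩
      rintro V hV ⟨q, hqV, hqF⟩ hsub
      have hqdn : q = d n := hsub ⟨hqV, hqF⟩
      subst hqdn
      -- U ∩ f ⁻¹' V is a nonempty relatively open subset of G, contained in the fiber of d n
      obtain ⟨O, hO, hpre⟩ := continuousOn_iff'.mp hfG V hV
      have hiff : ∀ x, x ∈ G → (f x ∈ V ↔ x ∈ O) := by
        intro x hxG
        constructor
        · intro h
          exact ((Set.ext_iff.mp hpre x).mp ⟨h, hxG⟩).1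
        · intro h
          exact ((Set.ext_iff.mp hpre x).mpr ⟨h, hxG⟩).1
      have hVeq : (W₀ ∩ O) ∩ G = U ∩ f ⁻¹' V := by
        ext x
        simp only [mem_inter_iff, mem_preimage, hUeq]
        constructor
        · rintro ⟨⟨hw, ho⟩, hg⟩
          exact ⟨⟨hw, hg⟩, (hiff x hg).mpr ho⟩
        · rintro ⟨⟨hw, hg⟩, hv⟩
          exact ⟨⟨hw, (hiff x hg).mp hv⟩, hg⟩
      obtain ⟨u₀, hu₀U, hfu₀⟩ := hdU n
      have hne' : ((W₀ ∩ O) ∩ G).Nonempty := by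
        rw [hVeq]
        exact ⟨u₀, hu₀U, by rw [mem_preimage, hfu₀]; exact hqV⟩
      have hnotI := hGI (W₀ ∩ O) (hW₀.inter hO) hne'
      apply hnotI
      refine Idown _ (hfib (d n)) _ ((hW₀.inter hO).measurableSet.inter hGmeas) ?_
      rw [hVeq]
      rintro x ⟨hxU, hxV⟩
      refine ⟨hGB (hUG hxU), hsub ⟨hxV, subset_closure ⟨x, hxU, rfl⟩⟩⟩
    · -- L ⊆ fCheckImage f U {d n}
      intro x hx
      exact mem_iUnion₂.mpr ⟨d n, rfl, hx.2⟩
  · -- Branch B : second calibration to avoid all fCheck-fibers over the d n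
    push_neg at hA
    have hKK2 : ∀ n, IsCompact (L0 ∩ fCheck f U (d n)) ∧ L0 ∩ fCheck f U (d n) ∈ I :=
      fun n => ⟨hL0c.inter_right (isClosed_fCheck f U (d n)), hA n⟩
    obtain ⟨L1, hL1c, hL1sub, hL1I⟩ := hI.2.2 L0 hL0c hL0I _ hKK2
    have hL1L0 : L1 ⊆ L0 := fun x hx => (hL1sub hx).1
    have hL1cl : L1 ⊆ closure U := hL1L0.trans hL0clU
    have hL1P : ∀ n x, x ∈ L1 → x ∉ fCheck f U (d n) := by
      intro n x hx hP
      exact (hL1sub hx).2 (mem_iUnion.mpr ⟨n, (hL1sub hx).1, hP⟩)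
    set M : Set Y := {y | ∃ x ∈ L1, x ∈ fCheck f U y} with hM
    have hMclosed : IsClosed M := isClosed_M hL1c
    have hMsub : M ⊆ closure (f '' U) := by
      rintro y ⟨x, hxL, u, hU, hux, hfy⟩
      exact mem_closure_of_tendsto hfy (Eventually.of_forall fun j => ⟨u j, hU j, rfl⟩)
    refine ⟨L1, M, hL1c, hL1cl, hMclosed.isCompact, hMsub,
      hboundary _ hL1cl (fun m hm => hL0c' m (hL1L0 hm)), hL1I, ?_, ?_⟩
    · refine ⟨hMsub, ?_⟩
      rintro V hV ⟨z, hzV, hzF⟩ hsub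
      have hVfU : (V ∩ f '' U).Nonempty := mem_closure_iff.mp hzF V hV hzV
      obtain ⟨n, hdn⟩ := hddense V hV hVfU
      have : d n ∈ M := hsub ⟨hdn, subset_closure (hdU n)⟩
      obtain ⟨x, hxL, hxP⟩ := this
      exact hL1P n x hxL hxP
    · intro x hx
      obtain ⟨y, hyF, hyc⟩ := exists_fCheck f U (hL1cl hx)
      exact mem_iUnion₂.mpr ⟨y, ⟨x, hx, hyc⟩, hyc⟩
end

section
/- Let I be a calibrated σ-ideal on a compactum X without isolated points containing all singletons, and let f : B → Y be a Borel-measurable map from a Borel set B ⊆ X into a compactum Y. Let μ be a σ-finite nonatomic Borel measure on Y and let F_i (i ∈ ℕ) be compact subsets of Y with μ(F_i) < ∞ for each i and μ(Y \ ⋃_i F_i) = 0. Suppose G ⊆ B \ ⋃_i f⁻¹(F_i) is a nonempty G_δ subset of X such that every nonempty relatively open subset of G does not belong to I and the restriction f|G is continuous. Then for every nonempty relatively open subset U of G and every ε > 0 there exist compact sets L ⊆ cl(U) and M ⊆ cl(f(U)) (closures in X and in Y respectively) such that: L is boundary in cl(U) and L ∉ I; μ(M) < ε; and L ⊆ f̌_U[M].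 -/
open MeasureTheory Topology Filter Set ENNReal

/-!
Let `Γ ⊆ X × Y` be the closure of the graph of `f` on `U`: its projection to `X` is `cl U`, and
`(x, y) ∈ Γ` gives `x ∈ f̌_U(y)`. Since `μ` is nonatomic and the `Fᵢ` have finite measure, `Y` is
covered up to a null set by countably many compact sets `C` with `μ C < ε`. If some
`A_C = {x | (x, y) ∈ Γ for some y ∈ C}` is `I`-positive, calibration gives `L ⊆ A_C` and we take
`M ⊆ C`. Otherwise every `A_C` is a compact set in `I`, calibration gives `L ⊆ cl U` avoiding all
of them, and `M = Γ[L]` misses every `C`, so it is null. Letting `L` also avoid a countable dense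
subset of `cl U` makes it boundary.
-/

section Nonatomic

variable {Y : Type*} [MetricSpace Y] [MeasurableSpace Y] [OpensMeasurableSpace Y]
  {μ : Measure Y} [NullSingletonClass μ]

theorem exists_pos_measure_inter_closedBall_lt {s : Set Y} (hs : μ s ≠ ∞) (y : Y) {ε : ℝ≥0∞}
    (hε : 0 < ε) :
    ∃ r > 0, μ (s ∩ Metric.closedBall y r) < ε := by
  have : IsFiniteMeasure (μ.restrict s) := isFiniteMeasure_restrict.2 hs
  have hlim := tendsto_measure_cthickening (μ := μ.restrict s) (s := {y})
    ⟨1, one_pos, measure_ne_top _ _⟩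
  rw [closure_singleton, nonpos_iff_eq_zero.1
    ((Measure.restrict_apply_le s {y}).trans_eq (measure_singleton y))] at hlim
  obtain ⟨r, hr, hrpos⟩ :=
    (((hlim.mono_left nhdsWithin_le_nhds).eventually_lt_const hε).and
      (self_mem_nhdsWithin (s := Ioi (0 : ℝ)))).exists
  refine ⟨r, hrpos, ?_⟩
  rwa [Metric.cthickening_singleton y (le_of_lt hrpos),
    Measure.restrict_apply Metric.isClosed_closedBall.measurableSet, inter_comm] at hr

theorem IsCompact.exists_finite_cover_measure_lt {K : Set Y} (hK : IsCompact K) (hKμ : μ K ≠ ∞)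
    {ε : ℝ≥0∞} (hε : 0 < ε) :
    ∃ 𝒞 : Set (Set Y), 𝒞.Finite ∧ (∀ C ∈ 𝒞, IsCompact C ∧ μ C < ε) ∧ K ⊆ ⋃₀ 𝒞 := by
  choose! r hr hrμ using fun y (_ : y ∈ K) => exists_pos_measure_inter_closedBall_lt hKμ y hε
  obtain ⟨t, htK, hKt⟩ := hK.elim_nhds_subcover (fun y => Metric.ball y (r y))
    (fun y hy => Metric.ball_mem_nhds y (hr y hy))
  refine ⟨(fun y => K ∩ Metric.closedBall y (r y)) '' t, t.finite_toSet.image _, ?_, ?_⟩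
  · rintro _ ⟨y, hy, rfl⟩
    exact ⟨hK.inter_right Metric.isClosed_closedBall, hrμ y (htK y hy)⟩
  · intro z hz
    obtain ⟨y, hy, hzy⟩ := mem_iUnion₂.1 (hKt hz)
    exact ⟨_, mem_image_of_mem _ hy, hz, Metric.ball_subset_closedBall hzy⟩

theorem exists_countable_compact_cover_measure_lt {F : ℕ → Set Y} (hF : ∀ i, IsCompact (F i))
    (hFμ : ∀ i, μ (F i) ≠ ∞) (hFco : μ (⋃ i, F i)ᶜ = 0) {ε : ℝ≥0∞} (hε : 0 < ε) :
    ∃ 𝒞 : Set (Set Y), 𝒞.Countable ∧ (∀ C ∈ 𝒞, IsCompact C ∧ μ C < ε) ∧ μ (⋃₀ 𝒞)ᶜ = 0 := by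
  choose 𝒞 h𝒞 h𝒞ε hF𝒞 using fun i => (hF i).exists_finite_cover_measure_lt (hFμ i) hε
  refine ⟨⋃ i, 𝒞 i, countable_iUnion fun i => (h𝒞 i).countable, ?_, ?_⟩
  · simp only [mem_iUnion]
    rintro C ⟨i, hC⟩
    exact h𝒞ε i C hC
  · refine measure_mono_null (compl_subset_compl.2 ?_) hFco
    rw [sUnion_iUnion]
    exact iUnion_mono hF𝒞

end Nonatomic

section GraphClosure

variable {X Y : Type*} [TopologicalSpace X] [TopologicalSpace Y] (f : X → Y) (U : Set X)

theorem mem_fCheck_of_mem_closure_graph [FirstCountableTopology X] [FirstCountableTopology Y]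
    {x : X} {y : Y} (h : (x, y) ∈ closure ((fun a => (a, f a)) '' U)) : x ∈ fCheck f U y := by
  obtain ⟨u, hu, hlim⟩ := mem_closure_iff_seq_limit.1 h
  choose v hvU hv using hu
  obtain rfl : u = fun n => (v n, f (v n)) := funext fun n => (hv n).symm
  exact ⟨v, hvU, hlim.fst_nhds, hlim.snd_nhds⟩

theorem fst_image_closure_graph_inter_subset_fCheckImage [FirstCountableTopology X]
    [FirstCountableTopology Y] (M : Set Y) :
    Prod.fst '' (closure ((fun a => (a, f a)) '' U) ∩ univ ×ˢ M) ⊆ fCheckImage f U M := by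
  rintro _ ⟨⟨x, y⟩, ⟨hxy, -, hy⟩, rfl⟩
  exact mem_biUnion hy (mem_fCheck_of_mem_closure_graph f U hxy)

theorem fst_image_closure_graph [CompactSpace Y] :
    Prod.fst '' closure ((fun a => (a, f a)) '' U) = closure U := by
  rw [← isClosedMap_fst_of_compactSpace.closure_image_eq_of_continuous continuous_fst,
    image_image, image_id']

theorem snd_image_closure_graph_subset :
    Prod.snd '' closure ((fun a => (a, f a)) '' U) ⊆ closure (f '' U) := by
  simpa only [image_image] using
    image_closure_subset_closure_image (s := (fun a => (a, f a)) '' U) continuous_snd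

end GraphClosure

theorem boundaryIn_of_disjoint_of_subset_closure {X : Type*} [TopologicalSpace X]
    {L F D : Set X} (hLF : L ⊆ F) (hDF : D ⊆ F) (hFD : F ⊆ closure D)
    (hLD : Disjoint L D) : BoundaryIn L F := by
  refine ⟨hLF, fun W hW ⟨z, hzW, hzF⟩ hWL => ?_⟩
  obtain ⟨d, hdW, hdD⟩ := mem_closure_iff.1 (hFD hzF) W hW hzW
  exact hLD.notMem_of_mem_right hdD (hWL ⟨hdW, hDF hdD⟩)

section Calibrated

variable {X : Type*} [TopologicalSpace X] [MeasurableSpace X] {I : Set (Set X)}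

theorem Calibrated.exists_isCompact_subset_notMem_disjoint (hI : Calibrated I) {K : Set X}
    (hK : IsCompact K) (hKI : K ∉ I) {𝒦 : Set (Set X)} (h𝒦 : 𝒦.Countable)
    (h𝒦I : ∀ C ∈ 𝒦, IsCompact C ∧ C ∈ I) :
    ∃ L, IsCompact L ∧ L ⊆ K ∧ L ∉ I ∧ ∀ C ∈ 𝒦, Disjoint L C := by
  rcases 𝒦.eq_empty_or_nonempty with rfl | hne
  · exact ⟨K, hK, subset_rfl, hKI, fun C hC => hC.elim⟩
  obtain ⟨e, rfl⟩ := h𝒦.exists_eq_range hne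
  obtain ⟨L, hL, hLK, hLI⟩ := hI.2.2 K hK hKI e fun n => h𝒦I _ (mem_range_self n)
  refine ⟨L, hL, hLK.trans sdiff_subset, hLI, ?_⟩
  rintro _ ⟨n, rfl⟩
  exact disjoint_left.2 fun x hx hxe => (hLK hx).2 (mem_iUnion.2 ⟨n, hxe⟩)

theorem Calibrated.exists_isCompact_subset_notMem_disjoint_of_countable (hI : Calibrated I)
    (hsing : ∀ x : X, {x} ∈ I) {K : Set X} (hK : IsCompact K) (hKI : K ∉ I) {D : Set X}
    (hD : D.Countable) {𝒦 : Set (Set X)} (h𝒦 : 𝒦.Countable)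
    (h𝒦I : ∀ C ∈ 𝒦, IsCompact C ∧ C ∈ I) :
    ∃ L, IsCompact L ∧ L ⊆ K ∧ L ∉ I ∧ Disjoint L D ∧ ∀ C ∈ 𝒦, Disjoint L C := by
  obtain ⟨L, hL, hLK, hLI, hLdisj⟩ := hI.exists_isCompact_subset_notMem_disjoint hK hKI
    ((hD.image singleton).union h𝒦) (by
      rintro C (⟨x, -, rfl⟩ | hC)
      exacts [⟨isCompact_singleton, hsing x⟩, h𝒦I C hC])
  refine ⟨L, hL, hLK, hLI, disjoint_right.2 fun x hx => ?_, fun C hC => hLdisj C (Or.inr hC)⟩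
  exact disjoint_singleton_right.1 (hLdisj {x} (Or.inl (mem_image_of_mem _ hx)))

end Calibrated

theorem Calibrated.exists_notMem_lying_over_measure_lt {X Y : Type*} [TopologicalSpace X]
    [T2Space X] [MeasurableSpace X] [TopologicalSpace Y] [T2Space Y] [MeasurableSpace Y]
    {I : Set (Set X)} (hI : Calibrated I) (hsing : ∀ x : X, {x} ∈ I)
    {Γ : Set (X × Y)} (hΓ : IsCompact Γ) (hΓI : Prod.fst '' Γ ∉ I) {D : Set X}
    (hD : D.Countable) {μ : Measure Y} {ε : ℝ≥0∞} (hε : 0 < ε) {𝒞 : Set (Set Y)}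
    (h𝒞 : 𝒞.Countable) (h𝒞ε : ∀ C ∈ 𝒞, IsCompact C ∧ μ C < ε) (h𝒞μ : μ (⋃₀ 𝒞)ᶜ = 0) :
    ∃ L M, IsCompact L ∧ L ⊆ Prod.fst '' Γ ∧ L ∉ I ∧ Disjoint L D ∧
      IsCompact M ∧ M ⊆ Prod.snd '' Γ ∧ μ M < ε ∧ L ⊆ Prod.fst '' (Γ ∩ univ ×ˢ M) := by
  set A : Set Y → Set X := fun C => Prod.fst '' (Γ ∩ univ ×ˢ C)
  have hA : ∀ C, IsCompact C → IsCompact (A C) := fun C hC =>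
    (hΓ.inter_right (isClosed_univ.prod hC.isClosed)).image continuous_fst
  by_cases hpos : ∃ C ∈ 𝒞, A C ∉ I
  · obtain ⟨C, hC, hCI⟩ := hpos
    obtain ⟨L, hL, hLA, hLI, hLD, -⟩ :=
      hI.exists_isCompact_subset_notMem_disjoint_of_countable hsing (hA C (h𝒞ε C hC).1) hCI hD
        countable_empty (fun _ h => h.elim)
    refine ⟨L, C ∩ Prod.snd '' Γ, hL, hLA.trans (image_mono inter_subset_left), hLI, hLD,
      (h𝒞ε C hC).1.inter_right (hΓ.image continuous_snd).isClosed, inter_subset_right,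
      (measure_mono inter_subset_left).trans_lt (h𝒞ε C hC).2, fun x hx => ?_⟩
    obtain ⟨p, ⟨hpΓ, -, hpC⟩, rfl⟩ := hLA hx
    exact ⟨p, ⟨hpΓ, trivial, hpC, p, hpΓ, rfl⟩, rfl⟩
  · push Not at hpos
    obtain ⟨L, hL, hLΓ, hLI, hLD, hLA⟩ :=
      hI.exists_isCompact_subset_notMem_disjoint_of_countable hsing (hΓ.image continuous_fst)
        hΓI hD (h𝒞.image A) (by
          rintro _ ⟨C, hC, rfl⟩
          exact ⟨hA C (h𝒞ε C hC).1, hpos C hC⟩)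
    have hM𝒞 : Prod.snd '' (Γ ∩ L ×ˢ univ) ⊆ (⋃₀ 𝒞)ᶜ := by
      rintro _ ⟨⟨x, y⟩, ⟨hxyΓ, hxL, -⟩, rfl⟩ ⟨C, hC, hyC⟩
      exact disjoint_left.1 (hLA _ (mem_image_of_mem A hC)) hxL
        ⟨(x, y), ⟨hxyΓ, trivial, hyC⟩, rfl⟩
    refine ⟨L, Prod.snd '' (Γ ∩ L ×ˢ univ), hL, hLΓ, hLI, hLD,
      (hΓ.inter_right (hL.isClosed.prod isClosed_univ)).image continuous_snd,
      image_mono inter_subset_left, (measure_mono_null hM𝒞 h𝒞μ).trans_lt hε, fun x hx => ?_⟩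
    obtain ⟨p, hpΓ, rfl⟩ := hLΓ hx
    exact ⟨p, ⟨hpΓ, trivial, p, ⟨hpΓ, hx, trivial⟩, rfl⟩, rfl⟩

theorem statement6_general {X Y : Type*}
    [MetricSpace X] [CompactSpace X] [MeasurableSpace X] [BorelSpace X]
    [MetricSpace Y] [CompactSpace Y] [MeasurableSpace Y] [BorelSpace Y]
    (I : Set (Set X)) (hI : Calibrated I) (hsing : ∀ x : X, {x} ∈ I)
    (f : X → Y)
    -- the measure μ and the compacta Fᵢ:
    (μ : Measure Y) (hμna : ∀ y : Y, μ {y} = 0)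
    (F : ℕ → Set Y) (hFc : ∀ i, IsCompact (F i)) (hFfin : ∀ i, μ (F i) < ⊤)
    (hFco : μ (Set.univ \ ⋃ i, F i) = 0)
    -- the set G:
    (G : Set X)
    (hGδ : IsGδ G)
    (hGI : ∀ W : Set X, IsOpen W → (W ∩ G).Nonempty → W ∩ G ∉ I) :
    ∀ U : Set X, U.Nonempty → (∃ W : Set X, IsOpen W ∧ U = W ∩ G) →
      ∀ ε : ℝ≥0∞, 0 < ε →
        ∃ L : Set X, ∃ M : Set Y,
          IsCompact L ∧ L ⊆ closure U ∧ IsCompact M ∧ M ⊆ closure (f '' U) ∧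
          BoundaryIn L (closure U) ∧ L ∉ I ∧
          μ M < ε ∧
          L ⊆ fCheckImage f U M := by
  rintro U hU ⟨W, hW, rfl⟩ ε hε
  have : NullSingletonClass μ := ⟨hμna⟩
  obtain ⟨𝒞, h𝒞, h𝒞ε, h𝒞μ⟩ := exists_countable_compact_cover_measure_lt hFc
    (fun i => (hFfin i).ne) (by rwa [compl_eq_univ_sdiff]) hε
  have hUc : IsCompact (closure (W ∩ G)) := isClosed_closure.isCompact
  obtain ⟨D, hDU, hD, hUD⟩ := hUc.isSeparable.exists_countable_dense_subset
  have hUI : closure (W ∩ G) ∉ I := fun h => hGI W hW hU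
    (hI.1.2.1 _ h _ (hW.measurableSet.inter hGδ.measurableSet) subset_closure)
  obtain ⟨L, M, hL, hLU, hLI, hLD, hM, hMfU, hMε, hLM⟩ :=
    hI.exists_notMem_lying_over_measure_lt hsing isClosed_closure.isCompact
      (by rwa [fst_image_closure_graph f]) hD hε h𝒞 h𝒞ε h𝒞μ
  rw [fst_image_closure_graph f] at hLU
  exact ⟨L, M, hL, hLU, hM, hMfU.trans (snd_image_closure_graph_subset f _),
    boundaryIn_of_disjoint_of_subset_closure hLU hDU hUD hLD, hLI, hMε,
    hLM.trans (fst_image_closure_graph_inter_subset_fCheckImage f _ M)⟩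

/-- Claim 5.1 (the key claim in the proof of Theorem 1.1(iii)). -/
theorem statement6 {X Y : Type*}
    [MetricSpace X] [CompactSpace X] [Nonempty X] [MeasurableSpace X] [BorelSpace X]
    [MetricSpace Y] [CompactSpace Y] [Nonempty Y] [MeasurableSpace Y] [BorelSpace Y]
    (hX : ∀ x : X, ¬ IsOpen ({x} : Set X))
    (I : Set (Set X)) (hI : Calibrated I) (hsing : ∀ x : X, {x} ∈ I)
    (B : Set X) (hB : MeasurableSet B)
    (f : X → Y) (hf : Measurable fun x : B => f x.1)
    -- the measure μ and the compacta Fᵢ: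
    (μ : Measure Y) [SigmaFinite μ] (hμna : ∀ y : Y, μ {y} = 0)
    (F : ℕ → Set Y) (hFc : ∀ i, IsCompact (F i)) (hFfin : ∀ i, μ (F i) < ⊤)
    (hFco : μ (Set.univ \ ⋃ i, F i) = 0)
    -- the set G:
    (G : Set X) (hGB : G ⊆ B \ ⋃ i, {x ∈ B | f x ∈ F i})
    (hGδ : IsGδ G) (hGne : G.Nonempty)
    (hGI : ∀ W : Set X, IsOpen W → (W ∩ G).Nonempty → W ∩ G ∉ I)
    (hfG : ContinuousOn f G) :
    ∀ U : Set X, U.Nonempty → (∃ W : Set X, IsOpen W ∧ U = W ∩ G) →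
      ∀ ε : ℝ≥0∞, 0 < ε →
        ∃ L : Set X, ∃ M : Set Y,
          IsCompact L ∧ L ⊆ closure U ∧ IsCompact M ∧ M ⊆ closure (f '' U) ∧
          BoundaryIn L (closure U) ∧ L ∉ I ∧
          μ M < ε ∧
          L ⊆ fCheckImage f U M :=
  statement6_general I hI hsing f μ hμna F hFc hFfin hFco G hGδ hGI
end

section
/- Let μ be a semifinite nonatomic Borel measure on a compactum X with μ(X) > 0. Then the σ-ideal J₀(μ) is not homogeneous; that is, there exists a Borel set E ⊆ X with E ∉ J₀(μ) such that for every Borel-measurable map f : X → X with range contained in E there is a set A ∈ J₀(μ) with f⁻¹(A) ∉ J₀(μ). -/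
/-!
Restrict `μ` to a compact set `K` of finite positive measure and let `S` be the support of
`m = μ|K`. Since `m` has no atoms and is outer regular, a countable dense subset of `S` lies in
a `Gδ` set `G ⊆ S` with `m G = 0`, hence `μ G = 0`. By the Baire category theorem in `S`, `G`
is not covered by countably many closed `m`-null sets, since these have empty interior in `S`;
so `G ∉ J₀(μ)`. If `f` maps into `G`, the finite measure `f_* m` lives on `G`, so by inner
regularity it charges a compact `C ⊆ G`; then `C ∈ J₀(μ)` but `μ (f ⁻¹' C) ≥ m (f ⁻¹' C) > 0`.
-/

open MeasureTheory Topology Filter Set ENNReal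

/-- `J₀(μ)`: Borel sets coverable by countably many compact sets of `μ`-measure zero. -/
def Jzero {X : Type*} [TopologicalSpace X] [MeasurableSpace X] (μ : Measure X) :
    Set (Set X) :=
  {A | MeasurableSet A ∧
    ∃ K : ℕ → Set X, (∀ n, IsCompact (K n) ∧ μ (K n) = 0) ∧ A ⊆ ⋃ n, K n}

/-- `J_f(μ)`: Borel sets coverable by countably many compact sets of finite `μ`-measure. -/
def Jfin {X : Type*} [TopologicalSpace X] [MeasurableSpace X] (μ : Measure X) :
    Set (Set X) :=
  {A | MeasurableSet A ∧
    ∃ K : ℕ → Set X, (∀ n, IsCompact (K n) ∧ μ (K n) < ⊤) ∧ A ⊆ ⋃ n, K n}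

/-- `μ` is semifinite: every Borel set of positive measure contains a Borel subset of
finite positive measure. -/
def Semifinite {X : Type*} [MeasurableSpace X] (μ : Measure X) : Prop :=
  ∀ A : Set X, MeasurableSet A → 0 < μ A →
    ∃ B ⊆ A, MeasurableSet B ∧ 0 < μ B ∧ μ B < ⊤

open TopologicalSpace

section Jzero

variable {X : Type*} [TopologicalSpace X] [MeasurableSpace X] {μ : Measure X}

lemma measure_eq_zero_of_mem_Jzero {A : Set X} (h : A ∈ Jzero μ) : μ A = 0 := by
  obtain ⟨-, K, hK, hAK⟩ := h
  exact measure_mono_null hAK (measure_iUnion_null fun n => (hK n).2)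

lemma mem_Jzero_of_isCompact [T2Space X] [OpensMeasurableSpace X] {C : Set X}
    (hC : IsCompact C) (hC0 : μ C = 0) : C ∈ Jzero μ :=
  ⟨hC.measurableSet, fun _ => C, fun _ => ⟨hC, hC0⟩, subset_iUnion (fun _ => C) 0⟩

end Jzero

lemma Semifinite.exists_isCompact_measure_pos_lt_top {X : Type*} [TopologicalSpace X]
    [PolishSpace X] [MeasurableSpace X] [BorelSpace X] {μ : Measure X} (hμ : Semifinite μ)
    (hpos : 0 < μ univ) : ∃ K, IsCompact K ∧ 0 < μ K ∧ μ K < ∞ := by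
  obtain ⟨B, -, hB, hB0, hBtop⟩ := hμ univ MeasurableSet.univ hpos
  have : IsFiniteMeasure (μ.restrict B) := isFiniteMeasure_restrict.2 hBtop.ne
  obtain ⟨K, hKB, hK, hK0⟩ :=
    hB.exists_lt_isCompact (μ := μ.restrict B) (by rwa [Measure.restrict_apply_self])
  exact ⟨K, hK, hK0.trans_le (Measure.restrict_apply_le B K),
    (measure_mono hKB).trans_lt hBtop⟩

namespace MeasureTheory.Measure

variable {X : Type*} [TopologicalSpace X] [MeasurableSpace X]

lemma exists_isGδ_superset_measure_zero (μ : Measure X) [μ.OuterRegular] {s : Set X}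
    (hs : μ s = 0) : ∃ G ⊇ s, IsGδ G ∧ μ G = 0 := by
  have hU : ∀ n : ℕ, ∃ U ⊇ s, IsOpen U ∧ μ U < (n : ℝ≥0∞)⁻¹ := fun n =>
    s.exists_isOpen_lt_of_lt _ (by rw [hs]; exact ENNReal.inv_pos.2 (natCast_ne_top n))
  choose U hsU hUo hUμ using hU
  refine ⟨⋂ n, U n, subset_iInter hsU, .iInter_of_isOpen hUo, ?_⟩
  by_contra hne
  obtain ⟨n, hn⟩ := ENNReal.exists_inv_nat_lt hne
  exact ((measure_mono (iInter_subset U n)).trans_lt (hUμ n)).not_gt hn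

lemma exists_isGδ_subset_support_dense_measure_zero [PseudoMetrizableSpace X]
    [SeparableSpace X] (μ : Measure X) [μ.OuterRegular] [NullSingletonClass μ] :
    ∃ G ⊆ μ.support, IsGδ G ∧ μ.support ⊆ closure G ∧ μ G = 0 := by
  obtain ⟨D, hDS, hD, hSD⟩ :=
    (IsSeparable.of_separableSpace μ.support).exists_countable_dense_subset
  obtain ⟨G, hDG, hG, hG0⟩ := μ.exists_isGδ_superset_measure_zero (hD.measure_zero μ)
  refine ⟨G ∩ μ.support, inter_subset_right, hG.inter isClosed_support.isGδ,
    hSD.trans (closure_mono (subset_inter hDG hDS)), measure_mono_null inter_subset_left hG0⟩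

variable [HereditarilyLindelofSpace X] {μ : Measure X}

lemma measure_pos_of_mem_nhdsWithin_support {x : X} {s : Set X} (hx : x ∈ μ.support)
    (hs : s ∈ 𝓝[μ.support] x) : 0 < μ s := by
  obtain ⟨u, hu, hus⟩ := mem_nhdsWithin_iff_exists_mem_nhds_inter.1 hs
  calc 0 < μ u := (mem_support_iff_forall x).1 hx u hu
    _ ≤ μ (u ∩ μ.support) + μ (u \ μ.support) := measure_le_inter_add_sdiff μ u _
    _ = μ (u ∩ μ.support) := by
        rw [measure_mono_null (sdiff_subset_compl _ _) measure_compl_support, add_zero]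
    _ ≤ μ s := measure_mono hus

lemma interior_preimage_val_support_eq_empty {C : Set X} (hC : μ C = 0) :
    interior (Subtype.val ⁻¹' C : Set μ.support) = ∅ := by
  refine eq_empty_of_forall_notMem fun x hx => ?_
  have hCx : Subtype.val '' (Subtype.val ⁻¹' C) ∈ 𝓝[μ.support] (x : X) :=
    mem_nhds_subtype_iff_nhdsWithin.1 (mem_interior_iff_mem_nhds.1 hx)
  exact (measure_pos_of_mem_nhdsWithin_support x.2 hCx).ne'
    (measure_mono_null (image_preimage_subset _ _) hC)

lemma not_subset_iUnion_of_isGδ_of_dense_support [BaireSpace μ.support] (hμ : μ ≠ 0)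
    {G : Set X} (hGS : G ⊆ μ.support) (hG : IsGδ G) (hSG : μ.support ⊆ closure G)
    {C : ℕ → Set X} (hC : ∀ n, IsClosed (C n)) (hC0 : ∀ n, μ (C n) = 0) :
    ¬ G ⊆ ⋃ n, C n := by
  intro hGC
  have : Nonempty μ.support := (nonempty_support hμ).to_subtype
  have hdense : Dense (Subtype.val ⁻¹' G : Set μ.support) := by
    rwa [Subtype.dense_iff, Subtype.image_preimage_coe, inter_eq_right.2 hGS]
  have hint := (hG.preimage continuous_subtype_val).dense_iUnion_interior_of_closed hdense
    (fun n => (hC n).preimage continuous_subtype_val)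
    (by rw [← preimage_iUnion]; exact preimage_mono hGC)
  simp only [interior_preimage_val_support_eq_empty (hC0 _), iUnion_empty] at hint
  exact not_nonempty_empty hint.nonempty

end MeasureTheory.Measure

lemma exists_isCompact_subset_measure_preimage_pos {X Y : Type*} [MeasurableSpace X]
    [TopologicalSpace Y] [PolishSpace Y] [MeasurableSpace Y] [BorelSpace Y]
    (μ : Measure X) [IsFiniteMeasure μ] (hμ : μ ≠ 0) {f : X → Y} (hf : Measurable f)
    {G : Set Y} (hG : MeasurableSet G) (hfG : range f ⊆ G) :
    ∃ C ⊆ G, IsCompact C ∧ 0 < μ (f ⁻¹' C) := by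
  have hνG : 0 < μ.map f G := by
    rwa [Measure.map_apply hf hG, preimage_eq_univ_iff.2 hfG, Measure.measure_univ_pos]
  obtain ⟨C, hCG, hC, hC0⟩ := hG.exists_lt_isCompact hνG
  exact ⟨C, hCG, hC, by rwa [Measure.map_apply hf hC.measurableSet] at hC0⟩

theorem statement7_general {X : Type*}
    [MetricSpace X] [CompactSpace X] [MeasurableSpace X] [BorelSpace X]
    (μ : Measure X) (hμna : ∀ x : X, μ {x} = 0) (hμsemi : Semifinite μ)
    (hμpos : 0 < μ Set.univ) :
    ∃ E : Set X, MeasurableSet E ∧ E ∉ Jzero μ ∧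
      ∀ f : X → X, Measurable f → Set.range f ⊆ E →
        ∃ A ∈ Jzero μ, f ⁻¹' A ∉ Jzero μ := by
  obtain ⟨K, hK, hK0, hKtop⟩ := hμsemi.exists_isCompact_measure_pos_lt_top hμpos
  set m := μ.restrict K
  have : NullSingletonClass μ := ⟨hμna⟩
  have : IsFiniteMeasure m := isFiniteMeasure_restrict.2 hKtop.ne
  have : CompactSpace m.support :=
    isCompact_iff_compactSpace.1 Measure.isClosed_support.isCompact
  have hm : m ≠ 0 := Measure.restrict_eq_zero.not.2 hK0.ne'
  have hmμ : m ≪ μ := Measure.absolutelyContinuous_of_le Measure.restrict_le_self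
  obtain ⟨G, hGS, hG, hSG, hmG⟩ := m.exists_isGδ_subset_support_dense_measure_zero
  have hGK : G ⊆ K := fun x hx =>
    hK.isClosed.closure_eq ▸ (Measure.support_restrict_subset (hGS hx)).1
  have hμG : μ G = 0 := by rwa [← Measure.restrict_eq_self μ hGK]
  refine ⟨G, hG.measurableSet, fun ⟨_, C, hC, hGC⟩ => ?_, fun f hf hfG => ?_⟩
  · exact Measure.not_subset_iUnion_of_isGδ_of_dense_support hm hGS hG hSG
      (fun n => (hC n).1.isClosed) (fun n => hmμ (hC n).2) hGC
  · obtain ⟨C, hCG, hC, hC0⟩ :=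
      exists_isCompact_subset_measure_preimage_pos m hm hf hG.measurableSet hfG
    exact ⟨C, mem_Jzero_of_isCompact hC (measure_mono_null hCG hμG), fun hpre =>
      hC0.ne' (hmμ (measure_eq_zero_of_mem_Jzero hpre))⟩

/-- Proposition 6.1(i): for a semifinite nonatomic Borel measure `μ` on a compactum `X`
with `μ(X) > 0`, the σ-ideal `J₀(μ)` is not homogeneous. -/
theorem statement7 {X : Type*}
    [MetricSpace X] [CompactSpace X] [Nonempty X] [MeasurableSpace X] [BorelSpace X]
    (μ : Measure X) (hμna : ∀ x : X, μ {x} = 0) (hμsemi : Semifinite μ)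
    (hμpos : 0 < μ Set.univ) :
    ∃ E : Set X, MeasurableSet E ∧ E ∉ Jzero μ ∧
      ∀ f : X → X, Measurable f → Set.range f ⊆ E →
        ∃ A ∈ Jzero μ, f ⁻¹' A ∉ Jzero μ :=
  statement7_general μ hμna hμsemi hμpos
end
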